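/- arXiv:1612.02642 — 3 statements merged into one kernel-verified Lean document; each statement's English description precedes it below -/
import Mathlib

section
/- For any tree T on n ≥ 3 vertices, the subtree core of T contains no pendant vertex. -/
open SimpleGraph

/-- Eccentricity of a vertex: maximum distance to any vertex. -/
noncomputable def ecc {V : Type*} [Fintype V] (G : SimpleGraph V) (v : V) : ℕ :=
  Finset.univ.sup fun u => G.dist u v

/-- Center: vertices of minimum eccentricity. -/
noncomputable def center {V : Type*} [Fintype V] (G : SimpleGraph V) : Set V :=
  {v | ∀ u, ecc G v ≤ ecc G u}

/-- Number of vertices of the component of `G - v` containing `u`; this equals the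
number of edges of the corresponding branch of a tree at `v`. -/
noncomputable def branchSize {V : Type*} (G : SimpleGraph V) (v : V) (u : {x : V // x ≠ v}) : ℕ :=
  Set.ncard {x : {y : V // y ≠ v} | (G.induce {y : V | y ≠ v}).Reachable ⟨u.1, u.2⟩ ⟨x.1, x.2⟩}

/-- Weight of a vertex: maximal number of edges in a branch at `v`. -/
noncomputable def weight {V : Type*} [Fintype V] [DecidableEq V] (G : SimpleGraph V) (v : V) : ℕ :=
  Finset.univ.sup fun u : {x : V // x ≠ v} => branchSize G v u

/-- Centroid: vertices of minimum weight. -/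
noncomputable def centroid {V : Type*} [Fintype V] [DecidableEq V] (G : SimpleGraph V) : Set V :=
  {v | ∀ u, weight G v ≤ weight G u}

/-- Number of subtrees (vertex sets inducing a connected subgraph) containing all of `A`. -/
noncomputable def numSubtreesOn {V : Type*} (G : SimpleGraph V) (A : Set V) : ℕ :=
  Set.ncard {S : Set V | A ⊆ S ∧ (G.induce S).Connected}

/-- Number of subtrees containing the vertex `v`. -/
noncomputable def numSubtrees {V : Type*} (G : SimpleGraph V) (v : V) : ℕ :=
  numSubtreesOn G {v}

/-- Subtree core: vertices maximizing the number of subtrees containing them. -/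
noncomputable def subtreeCore {V : Type*} (G : SimpleGraph V) : Set V :=
  {v | ∀ u, numSubtrees G u ≤ numSubtrees G v}

/-- Distance between two sets of vertices: minimum pairwise distance. -/
noncomputable def setDist {V : Type*} (G : SimpleGraph V) (A B : Set V) : ℕ :=
  sInf {d | ∃ a ∈ A, ∃ b ∈ B, G.dist a b = d}

/-- The path-star tree `P_{n-g,g}`: a path on vertices `0, …, n-g-1` (paper labels
`1, …, n-g`) with `g` pendant vertices `n-g, …, n-1` attached to vertex `n-g-1`. -/
def pathStar (n g : ℕ) : SimpleGraph (Fin n) :=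
  SimpleGraph.fromRel fun i j =>
    (i.val + 1 = j.val ∧ j.val < n - g) ∨ (i.val = n - g - 1 ∧ n - g ≤ j.val)

/-- The tree obtained from `G` by detaching the pendant vertex `y` and attaching it
as a pendant vertex adjacent to `w`. -/
def reattach {V : Type*} (G : SimpleGraph V) (y w : V) : SimpleGraph V :=
  SimpleGraph.fromRel fun a b => (G.Adj a b ∧ a ≠ y ∧ b ≠ y) ∨ (a = y ∧ b = w)

/-!
Let `v` be a pendant vertex with neighbour `u`, and let `N` count the subtrees containing both.
Inserting `v` is a bijection from the subtrees containing `u` but not `v` onto those containing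
both, and every subtree through `v` other than `{v}` contains `u`; hence `f(u) = 2N` and
`f(v) = N + 1`. In a tree with at least three vertices `u` has a second neighbour `w`, so `{u}`
and `{u, w}` show `N ≥ 2`, i.e. `f(v) < f(u)`.
-/

namespace SimpleGraph

variable {V : Type*} {G : SimpleGraph V}

lemma Connected.induce_diff_singleton {S : Set V} {v : V} (hS : (G.induce S).Connected)
    (hv : (G.neighborSet v).Subsingleton) (hne : (S \ {v}).Nonempty) :
    (G.induce (S \ {v})).Connected := by
  let s : Set S := {x | x.1 ≠ v}
  have hs : ((G.induce S).induce s).Preconnected :=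
    hS.preconnected.induce_of_degree_eq_one fun x hx =>
      (hv.preimage Subtype.val_injective).anti fun y hy => by
        simpa [s, show x.1 = v by simpa [s] using hx] using hy
  let f : (G.induce S).induce s →g G.induce (S \ {v}) :=
    { toFun := fun x => ⟨x.1.1, x.1.2, x.2⟩
      map_rel' := id }
  have hf : Function.Surjective f := fun x => ⟨⟨⟨x.1, x.2.1⟩, x.2.2⟩, rfl⟩
  have : Nonempty (S \ {v} : Set V) := hne.to_subtype
  exact ⟨hs.map f hf⟩

lemma Connected.induce_insert {S : Set V} {u v : V} (hS : (G.induce S).Connected) (hu : u ∈ S)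
    (huv : G.Adj v u) : (G.induce (insert v S)).Connected := by
  have hunion : ({v, u} ∪ S : Set V) = insert v S := by
    rw [Set.insert_union, Set.singleton_union, Set.insert_eq_of_mem hu]
  rw [← hunion]
  exact induce_union_connected (induce_pair_connected_of_adj huv).preconnected hS.preconnected
    ⟨u, by simp, hu⟩

lemma Connected.exists_adj_mem_of_induce {S : Set V} {v x : V} (hS : (G.induce S).Connected)
    (hv : v ∈ S) (hx : x ∈ S) (hxv : x ≠ v) : ∃ u ∈ S, G.Adj v u := by
  obtain ⟨p⟩ := hS.preconnected ⟨v, hv⟩ ⟨x, hx⟩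
  have hp : ¬p.Nil := Walk.not_nil_of_ne (by simpa [Subtype.ext_iff] using hxv.symm)
  exact ⟨p.snd.1, p.snd.2, p.adj_snd hp⟩

lemma Connected.exists_adj_ne_of_neighborSet_eq_singleton (hG : G.Connected) {u v x : V}
    (hv : G.neighborSet v = {u}) (hxu : x ≠ u) (hxv : x ≠ v) : ∃ w, G.Adj u w ∧ w ≠ v := by
  obtain ⟨p⟩ := hG.preconnected v x
  obtain ⟨d, -, hd, hd'⟩ := p.exists_boundary_dart {v, u} (by simp) (by simp [hxu, hxv])
  simp only [Set.mem_insert_iff, Set.mem_singleton_iff, not_or] at hd hd'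
  rcases hd with hd | hd
  · have hdv : d.snd ∈ G.neighborSet v := hd ▸ d.adj
    rw [hv] at hdv
    exact absurd hdv hd'.2
  · exact ⟨d.snd, hd ▸ d.adj, hd'.1⟩

end SimpleGraph

section Pendant

variable {V : Type*}

def subtreesAvoiding (G : SimpleGraph V) (u v : V) : Set (Set V) :=
  {S | u ∈ S ∧ v ∉ S ∧ (G.induce S).Connected}

variable {G : SimpleGraph V} {u v w : V}

lemma ncard_subtreesAvoiding_of_neighborSet_eq (hv : G.neighborSet v = {u}) :
    (subtreesAvoiding G u v).ncard = numSubtreesOn G {u, v} := by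
  have hadj : G.Adj v u := by simp [← mem_neighborSet, hv]
  have himage : insert v '' subtreesAvoiding G u v =
      {S | {u, v} ⊆ S ∧ (G.induce S).Connected} := by
    ext S
    constructor
    · rintro ⟨T, ⟨huT, -, hT⟩, rfl⟩
      exact ⟨Set.insert_subset_iff.2 ⟨Set.mem_insert_of_mem _ huT, by simp⟩,
        hT.induce_insert huT hadj⟩
    · rintro ⟨huvS, hS⟩
      have hu : u ∈ S := huvS (by simp)
      refine ⟨S \ {v}, ⟨⟨hu, hadj.ne'⟩, by simp,
        hS.induce_diff_singleton (hv ▸ Set.subsingleton_singleton) ⟨u, hu, hadj.ne'⟩⟩, ?_⟩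
      rw [Set.insert_sdiff_singleton, Set.insert_eq_of_mem (huvS (by simp))]
  have hinj : Set.InjOn (insert v) (subtreesAvoiding G u v) := fun S hS T hT h => by
    rw [← Set.insert_sdiff_self_of_notMem hS.2.1, ← Set.insert_sdiff_self_of_notMem hT.2.1, h]
  rw [numSubtreesOn, ← himage, hinj.ncard_image]

variable [Finite V]

lemma numSubtrees_eq_numSubtreesOn_pair_add (G : SimpleGraph V) (u v : V) :
    numSubtrees G u = numSubtreesOn G {u, v} + (subtreesAvoiding G u v).ncard := by
  have hsplit : {S : Set V | {u} ⊆ S ∧ (G.induce S).Connected} =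
      {S | {u, v} ⊆ S ∧ (G.induce S).Connected} ∪ subtreesAvoiding G u v := by
    ext S
    simp only [subtreesAvoiding, Set.singleton_subset_iff, Set.insert_subset_iff,
      Set.mem_ofPred_eq, Set.mem_union]
    tauto
  have hdisj : Disjoint {S : Set V | {u, v} ⊆ S ∧ (G.induce S).Connected}
      (subtreesAvoiding G u v) :=
    Set.disjoint_left.2 fun S hS hS' => hS'.2.1 (hS.1 (by simp))
  rw [numSubtrees, numSubtreesOn, hsplit, Set.ncard_union_eq hdisj, numSubtreesOn]

lemma numSubtrees_of_neighborSet_eq (hv : G.neighborSet v = {u}) :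
    numSubtrees G v = numSubtreesOn G {u, v} + 1 := by
  have hadj : G.Adj v u := by simp [← mem_neighborSet, hv]
  have hsplit : {S : Set V | {v} ⊆ S ∧ (G.induce S).Connected} =
      insert {v} {S | {u, v} ⊆ S ∧ (G.induce S).Connected} := by
    ext S
    simp only [Set.singleton_subset_iff, Set.insert_subset_iff, Set.mem_ofPred_eq,
      Set.mem_insert_iff]
    constructor
    · rintro ⟨hvS, hS⟩
      refine or_iff_not_imp_left.2 fun hSv => ⟨⟨?_, hvS⟩, hS⟩
      obtain ⟨x, hxS, hxv⟩ := ((Set.nontrivial_iff_ne_singleton hvS).2 hSv).exists_ne v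
      obtain ⟨u', hu'S, hvu'⟩ := hS.exists_adj_mem_of_induce hvS hxS hxv
      rwa [show u' = u by simpa [← mem_neighborSet, hv] using hvu'] at hu'S
    · rintro (rfl | ⟨⟨-, hvS⟩, hS⟩)
      · exact ⟨rfl, by simp [induce_singleton_eq_top]⟩
      · exact ⟨hvS, hS⟩
  have hnot : ({v} : Set V) ∉ {S | {u, v} ⊆ S ∧ (G.induce S).Connected} :=
    fun h => hadj.ne' (h.1 (by simp))
  rw [numSubtrees, numSubtreesOn, hsplit, Set.ncard_insert_of_notMem hnot, numSubtreesOn]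

lemma two_le_ncard_subtreesAvoiding (huv : u ≠ v) (huw : G.Adj u w) (hwv : w ≠ v) :
    2 ≤ (subtreesAvoiding G u v).ncard := by
  have hsingle : ({u} : Set V) ∈ subtreesAvoiding G u v :=
    ⟨rfl, huv.symm, by simp [induce_singleton_eq_top]⟩
  have hpair : ({u, w} : Set V) ∈ subtreesAvoiding G u v :=
    ⟨by simp, by simp [huv.symm, hwv.symm], induce_pair_connected_of_adj huw⟩
  have hne : ({u} : Set V) ≠ {u, w} := fun h => huw.ne' (h ▸ by simp : w ∈ ({u} : Set V))
  exact (Set.one_lt_ncard_iff (Set.toFinite _)).2 ⟨_, _, hsingle, hpair, hne⟩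

lemma numSubtrees_lt_of_neighborSet_eq (hv : G.neighborSet v = {u}) (huw : G.Adj u w)
    (hwv : w ≠ v) : numSubtrees G v < numSubtrees G u := by
  have huv : u ≠ v := (show G.Adj v u by simp [← mem_neighborSet, hv]).ne'
  have h2 : 2 ≤ numSubtreesOn G {u, v} :=
    ncard_subtreesAvoiding_of_neighborSet_eq hv ▸ two_le_ncard_subtreesAvoiding huv huw hwv
  rw [numSubtrees_of_neighborSet_eq hv, numSubtrees_eq_numSubtreesOn_pair_add G u v,
    ncard_subtreesAvoiding_of_neighborSet_eq hv]
  omega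

end Pendant

theorem subtreeCore_no_pendant_general {V : Type} [Fintype V]
    (G : SimpleGraph V) [DecidableRel G.Adj] (hT : G.IsTree)
    (h3 : 3 ≤ Fintype.card V) (v : V) (hv : G.degree v = 1) :
    v ∉ subtreeCore G := by
  classical
  obtain ⟨u, hadj, huniq⟩ := degree_eq_one_iff_existsUnique_adj.mp hv
  have hu : G.neighborSet v = {u} := Set.eq_singleton_iff_unique_mem.2 ⟨hadj, huniq⟩
  obtain ⟨x, -, hx⟩ : ∃ x ∈ Finset.univ, x ∉ ({u, v} : Finset V) :=
    Finset.exists_mem_notMem_of_card_lt_card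
      (by simpa using Finset.card_le_two.trans_lt (by omega : 2 < Fintype.card V))
  obtain ⟨hxu, hxv⟩ : x ≠ u ∧ x ≠ v := by simpa using hx
  obtain ⟨w, huw, hwv⟩ := hT.connected.exists_adj_ne_of_neighborSet_eq_singleton hu hxu hxv
  exact fun hcore => (numSubtrees_lt_of_neighborSet_eq hu huw hwv).not_ge (hcore u)

/-- For any tree on `n ≥ 3` vertices, the subtree core contains no pendant vertex. -/
theorem subtreeCore_no_pendant {V : Type} [Fintype V] [DecidableEq V]
    (G : SimpleGraph V) [DecidableRel G.Adj] (hT : G.IsTree)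
    (h3 : 3 ≤ Fintype.card V) (v : V) (hv : G.degree v = 1) :
    v ∉ subtreeCore G :=
  subtreeCore_no_pendant_general G hT h3 v hv
end

section
/- Let T be a tree, v a pendant vertex of T with neighbor w, and suppose T has at least 3 vertices. Then f_T(v) = 1 + f_{T−v}(w) and f_T(w) = 2·f_{T−v}(w), so f_T(w) > f_T(v). -/
open SimpleGraph

/-!
Subtrees through a pendant vertex `v` with neighbour `w` are `{v}` and the sets `S ∪ {v}`
with `S` a subtree of `T - v` through `w`; subtrees through `w` either avoid `v`, and are then
the subtrees of `T - v` through `w`, or contain `v`, and are again of the form `S ∪ {v}`.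
Hence `f_T(v) = 1 + N` and `f_T(w) = 2N` with `N = f_{T-v}(w)`, and `N ≥ 2` because `T - v` is
connected with at least two vertices, so both `{w}` and `T - v` itself are subtrees through `w`.
-/

namespace SimpleGraph

variable {V : Type*} {G : SimpleGraph V}

noncomputable def induceInduceIso (U : Set V) (S : Set U) :
    (G.induce U).induce S ≃g G.induce (Subtype.val '' S) where
  toEquiv := Equiv.Set.image Subtype.val S Subtype.val_injective
  map_rel_iff' := by
    rintro ⟨⟨a, hA⟩, hS⟩ ⟨⟨b, hB⟩, hS'⟩
    simp [Equiv.Set.image, Equiv.Set.imageOfInjOn]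

lemma induce_induce_connected_iff (U : Set V) (S : Set U) :
    ((G.induce U).induce S).Connected ↔ (G.induce (Subtype.val '' S)).Connected :=
  (induceInduceIso U S).connected_iff

lemma induce_singleton_connected (v : V) : (G.induce {v}).Connected := by
  rw [induce_singleton_eq_top]
  exact connected_top

lemma induce_insert_connected_of_adj {v w : V} (hvw : G.Adj v w) {S : Set V} (hwS : w ∈ S)
    (hS : (G.induce S).Connected) : (G.induce (insert v S)).Connected := by
  have := induce_union_connected (induce_pair_connected_of_adj hvw).preconnected
    hS.preconnected ⟨w, by simp, hwS⟩
  rwa [Set.insert_union, Set.singleton_union, Set.insert_eq_of_mem hwS] at this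

lemma induce_diff_singleton_connected_of_pendant {v w : V} (hvw : G.Adj v w)
    (hpend : ∀ x, G.Adj v x → x = w) {S : Set V} (hwS : w ∈ S)
    (hS : (G.induce S).Connected) : (G.induce (S \ {v})).Connected := by
  by_cases hvS : v ∈ S
  swap
  · rwa [Set.sdiff_singleton_eq_self hvS]
  classical
  have hnbr : (G.induce S).neighborSet ⟨v, hvS⟩ = {⟨w, hwS⟩} := by
    ext x
    simp only [mem_neighborSet, comap_adj, Function.Embedding.coe_subtype,
      Set.mem_singleton_iff]
    exact ⟨fun h => Subtype.ext (hpend x h), fun h => h ▸ hvw⟩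
  have : Fintype ((G.induce S).neighborSet ⟨v, hvS⟩) :=
    (hnbr ▸ Set.finite_singleton _ : Set.Finite _).fintype
  have hdeg : (G.induce S).degree ⟨v, hvS⟩ = 1 :=
    degree_eq_one_iff_existsUnique_adj.mpr
      ⟨⟨w, hwS⟩, hvw, fun x hx => Subtype.ext (hpend x hx)⟩
  have := hS.induce_compl_singleton_of_degree_eq_one hdeg
  rwa [induce_induce_connected_iff, Set.image_val_compl, Set.image_singleton] at this

lemma mem_of_induce_connected_of_pendant {v w : V} (hpend : ∀ x, G.Adj v x → x = w)
    {S : Set V} (hS : (G.induce S).Connected) (hvS : v ∈ S) {u : V} (huS : u ∈ S)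
    (huv : u ≠ v) : w ∈ S := by
  obtain ⟨p⟩ := hS ⟨v, hvS⟩ ⟨u, huS⟩
  cases p with
  | nil => exact absurd rfl huv
  | cons h _ => exact hpend _ h ▸ Subtype.prop _

end SimpleGraph

variable {V : Type*} {G : SimpleGraph V}

lemma numSubtreesOn_induce (U : Set V) (A : Set U) :
    numSubtreesOn (G.induce U) A =
      {S : Set V | Subtype.val '' A ⊆ S ∧ S ⊆ U ∧ (G.induce S).Connected}.ncard := by
  have hset : {S : Set V | Subtype.val '' A ⊆ S ∧ S ⊆ U ∧ (G.induce S).Connected} =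
      Set.image Subtype.val '' {S | A ⊆ S ∧ ((G.induce U).induce S).Connected} := by
    ext S
    simp only [Set.mem_ofPred_eq, Set.mem_image, induce_induce_connected_iff]
    constructor
    · rintro ⟨hA, hU, hS⟩
      have hS' : Subtype.val '' (Subtype.val ⁻¹' S : Set U) = S :=
        Set.image_preimage_eq_of_subset (by simpa)
      exact ⟨Subtype.val ⁻¹' S, ⟨Set.image_subset_iff.mp hA, hS'.symm ▸ hS⟩, hS'⟩
    · rintro ⟨S, ⟨hA, hS⟩, rfl⟩
      exact ⟨Set.image_mono hA, Subtype.coe_image_subset U S, hS⟩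
  rw [hset, Set.ncard_image_of_injective _ (Set.image_injective.mpr Subtype.val_injective)]
  rfl

lemma numSubtrees_induce_ne_eq_ncard {v w : V} (hwv : w ≠ v) :
    numSubtrees (G.induce {x | x ≠ v}) ⟨w, hwv⟩ =
      {S : Set V | w ∈ S ∧ v ∉ S ∧ (G.induce S).Connected}.ncard := by
  rw [numSubtrees, numSubtreesOn_induce, Set.image_singleton]
  simp_rw [Set.singleton_subset_iff]
  exact congrArg _ <| Set.ext fun S =>
    and_congr_right' (and_congr_left' Set.subset_compl_singleton_iff)

lemma numSubtrees_eq_numSubtreesOn_pair_add_s6 [Finite V] {v w : V} (hwv : w ≠ v) :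
    numSubtrees G w =
      numSubtreesOn G {v, w} + numSubtrees (G.induce {x | x ≠ v}) ⟨w, hwv⟩ := by
  rw [numSubtrees_induce_ne_eq_ncard, numSubtrees, numSubtreesOn, numSubtreesOn,
    ← Set.ncard_union_eq (Set.disjoint_left.mpr fun S hS hS' => hS'.2.1 (hS.1 (by simp)))]
  congr 1
  ext S
  simp only [Set.mem_union, Set.mem_ofPred_eq, Set.singleton_subset_iff, Set.insert_subset_iff]
  tauto

lemma numSubtreesOn_pair_eq_of_pendant {v w : V} (hvw : G.Adj v w)
    (hpend : ∀ x, G.Adj v x → x = w) :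
    numSubtreesOn G {v, w} = numSubtrees (G.induce {x | x ≠ v}) ⟨w, hvw.ne'⟩ := by
  rw [numSubtrees_induce_ne_eq_ncard, numSubtreesOn]
  refine Set.ncard_congr (fun S _ => S \ {v}) ?_ ?_ ?_
  · rintro S ⟨hvwS, hS⟩
    have hwS : w ∈ S := hvwS (by simp)
    exact ⟨⟨hwS, hvw.ne'⟩, by simp,
      induce_diff_singleton_connected_of_pendant hvw hpend hwS hS⟩
  · rintro S S' ⟨hS, -⟩ ⟨hS', -⟩ h
    rw [← Set.insert_sdiff_self_of_mem (hS (Set.mem_insert v _)), h,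
      Set.insert_sdiff_self_of_mem (hS' (Set.mem_insert v _))]
  · rintro S ⟨hwS, hvS, hS⟩
    refine ⟨insert v S, ⟨?_, induce_insert_connected_of_adj hvw hwS hS⟩,
      Set.insert_sdiff_self_of_notMem hvS⟩
    exact Set.insert_subset_insert (Set.singleton_subset_iff.mpr hwS)

lemma numSubtrees_eq_one_add_of_pendant [Finite V] {v w : V} (hvw : G.Adj v w)
    (hpend : ∀ x, G.Adj v x → x = w) :
    numSubtrees G v = 1 + numSubtreesOn G {v, w} := by
  have hset : {S : Set V | {v} ⊆ S ∧ (G.induce S).Connected} =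
      insert {v} {S | {v, w} ⊆ S ∧ (G.induce S).Connected} := by
    ext S
    simp only [Set.singleton_subset_iff, Set.mem_ofPred_eq, Set.mem_insert_iff,
      Set.insert_subset_iff]
    constructor
    · rintro ⟨hvS, hS⟩
      by_cases hSv : S = {v}
      · exact .inl hSv
      · obtain ⟨u, huS, huv⟩ := ((Set.nontrivial_iff_ne_singleton hvS).mpr hSv).exists_ne v
        exact .inr ⟨⟨hvS, mem_of_induce_connected_of_pendant hpend hS hvS huS huv⟩, hS⟩
    · rintro (rfl | ⟨⟨hvS, -⟩, hS⟩)
      · exact ⟨rfl, induce_singleton_connected v⟩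
      · exact ⟨hvS, hS⟩
  have hv_notMem : {v} ∉ {S : Set V | {v, w} ⊆ S ∧ (G.induce S).Connected} :=
    fun ⟨h, _⟩ => hvw.ne (h (Set.mem_insert_of_mem v rfl)).symm
  rw [numSubtrees, numSubtreesOn, hset, Set.ncard_insert_of_notMem hv_notMem, add_comm]
  rfl

lemma one_lt_numSubtrees [Finite V] [Nontrivial V] (hG : G.Connected) (x : V) :
    1 < numSubtrees G x :=
  (Set.one_lt_ncard).mpr ⟨{x}, ⟨subset_rfl, induce_singleton_connected x⟩,
    Set.univ, ⟨Set.subset_univ _, (induceUnivIso G).connected_iff.mpr hG⟩,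
    Set.singleton_ne_univ x⟩

theorem numSubtrees_pendant_general {V : Type} [Fintype V]
    (G : SimpleGraph V) [DecidableRel G.Adj] (hT : G.IsTree)
    (h3 : 3 ≤ Fintype.card V) (v w : V) (hv : G.degree v = 1) (hw : G.Adj v w) :
    numSubtrees G v = 1 + numSubtrees (G.induce {x : V | x ≠ v}) ⟨w, hw.ne'⟩ ∧
    numSubtrees G w = 2 * numSubtrees (G.induce {x : V | x ≠ v}) ⟨w, hw.ne'⟩ ∧
    numSubtrees G v < numSubtrees G w := by
  have hpend : ∀ x, G.Adj v x → x = w := fun x hx =>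
    (degree_eq_one_iff_existsUnique_adj.mp hv).unique hx hw
  have hpair := numSubtreesOn_pair_eq_of_pendant hw hpend
  have hfv := numSubtrees_eq_one_add_of_pendant hw hpend
  have hfw := numSubtrees_eq_numSubtreesOn_pair_add_s6 (G := G) hw.ne'
  have hconn : (G.induce {x : V | x ≠ v}).Connected :=
    hT.connected.induce_compl_singleton_of_degree_eq_one hv
  have : Nontrivial {x : V | x ≠ v} := by
    classical
    rw [← Fintype.one_lt_card_iff_nontrivial, Set.card_ne_eq]
    omega
  have hN := one_lt_numSubtrees hconn ⟨w, hw.ne'⟩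
  omega

/-- If `v` is a pendant vertex of a tree `T` on at least `3` vertices, with neighbor `w`,
then `f_T(v) = 1 + f_{T-v}(w)`, `f_T(w) = 2 f_{T-v}(w)`, hence `f_T(w) > f_T(v)`. -/
theorem numSubtrees_pendant {V : Type} [Fintype V] [DecidableEq V]
    (G : SimpleGraph V) [DecidableRel G.Adj] (hT : G.IsTree)
    (h3 : 3 ≤ Fintype.card V) (v w : V) (hv : G.degree v = 1) (hw : G.Adj v w) :
    numSubtrees G v = 1 + numSubtrees (G.induce {x : V | x ≠ v}) ⟨w, hw.ne'⟩ ∧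
    numSubtrees G w = 2 * numSubtrees (G.induce {x : V | x ≠ v}) ⟨w, hw.ne'⟩ ∧
    numSubtrees G v < numSubtrees G w :=
  numSubtrees_pendant_general G hT h3 v w hv hw
end

section
/- The distance between the center and the subtree core of the path-star tree P_{n−g,g} equals: 2^{g−1}−1 if 2^g+1 ≤ n−g and n−g is even; 2^{g−1}−2 if 2^g+1 ≤ n−g and n−g is odd; (n−g−2)/2 if 2^g+1 > n−g and n−g is even; (n−g−3)/2 if 2^g+1 > n−g and n−g is odd. -/
open SimpleGraph

/-!
Write `m = n - g` and `level v = min v m`, the distance from the end `0` of the path. The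
eccentricity of `v` is `max (level v) (m - level v)`, so the center is the middle of the path.
A connected vertex set through a path vertex is a segment `[a, b]` of the path plus a set of
pendant vertices, which must be empty unless `b` is the hub `m - 1`. Hence the path vertex `i`
lies in `(i + 1) * (m - 1 - i + 2 ^ g)` subtrees, every pendant vertex lies in fewer subtrees
than the hub, and the least vertex of the subtree core is the least maximiser of this parabola
on `[0, m)`, namely `min (m - 1) ((m + 2 ^ g - 2) / 2)`.
-/

namespace SimpleGraph

variable {V : Type*} {G : SimpleGraph V}

lemma Walk.le_add_length (f : V → ℕ) (hf : ∀ u v, G.Adj u v → f v ≤ f u + 1) {u v : V}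
    (p : G.Walk u v) : f v ≤ f u + p.length := by
  induction p with
  | nil => simp
  | cons h p ih => have := hf _ _ h; rw [length_cons]; omega

lemma Walk.exists_mem_support_eq (f : V → ℕ) (hf : ∀ u v, G.Adj u v → f v ≤ f u + 1)
    {u v : V} (p : G.Walk u v) {k : ℕ} (hu : f u ≤ k) (hv : k ≤ f v) :
    ∃ w ∈ p.support, f w = k := by
  induction p with
  | @nil x => exact ⟨x, by simp, by omega⟩
  | @cons u w v h p ih =>
    by_cases huk : f u = k
    · exact ⟨u, by simp, huk⟩
    · obtain ⟨x, hx, hxk⟩ := ih (by have := hf _ _ h; omega) hv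
      exact ⟨x, by simp [hx], hxk⟩

lemma Reachable.le_add_dist (f : V → ℕ) (hf : ∀ u v, G.Adj u v → f v ≤ f u + 1) {u v : V}
    (h : G.Reachable u v) : f v ≤ f u + G.dist u v := by
  obtain ⟨p, hp⟩ := h.exists_walk_length_eq_dist
  exact hp ▸ p.le_add_length f hf

lemma connected_of_exists_adj_lt (r : V) (f : V → ℕ)
    (h : ∀ v, v ≠ r → ∃ w, G.Adj v w ∧ f w < f v) : G.Connected := by
  have reach : ∀ k, ∀ v, f v = k → G.Reachable v r := by
    intro k
    induction k using Nat.strong_induction_on with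
    | _ k ih =>
      intro v hv
      by_cases hvr : v = r
      · exact hvr ▸ Reachable.refl v
      · obtain ⟨w, hvw, hw⟩ := h v hvr
        exact hvw.reachable.trans (ih _ (hv ▸ hw) w rfl)
  exact (connected_iff_exists_forall_reachable G).mpr ⟨r, fun v => (reach _ v rfl).symm⟩

end SimpleGraph

lemma dist_le_ecc {V : Type*} [Fintype V] (G : SimpleGraph V) (u v : V) :
    G.dist u v ≤ ecc G v :=
  Finset.le_sup (f := fun u => G.dist u v) (Finset.mem_univ u)

lemma setDist_eq_dist {V : Type*} {G : SimpleGraph V} {A B : Set V} {a b : V} (ha : a ∈ A)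
    (hb : b ∈ B) (hmin : ∀ x ∈ A, ∀ y ∈ B, G.dist a b ≤ G.dist x y) :
    setDist G A B = G.dist a b :=
  le_antisymm (Nat.sInf_le ⟨a, ha, b, hb, rfl⟩)
    (le_csInf ⟨_, a, ha, b, hb, rfl⟩ fun _ ⟨x, hx, y, hy, hxy⟩ => hxy ▸ hmin x hx y hy)

/-- Every subtree through the leaf `q`, except `{q}` itself, passes through its neighbour `h`;
the subtrees `{h}` and `T` through `h` are not of this form. -/
lemma numSubtrees_lt_of_forall_adj_eq {V : Type*} [Finite V] {G : SimpleGraph V} {q h : V}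
    {T : Set V} (hleaf : ∀ w, G.Adj q w → w = h) (hT : (G.induce T).Connected) (hhT : h ∈ T)
    (hqT : q ∉ T) (hTh : T ≠ {h}) : numSubtrees G q < numSubtrees G h := by
  set Sh := {S : Set V | {h} ⊆ S ∧ (G.induce S).Connected}
  have hsingle : {h} ∈ Sh := ⟨le_rfl, by simp [connected_top]⟩
  have hTmem : T ∈ Sh \ {{h}} := ⟨⟨Set.singleton_subset_iff.mpr hhT, hT⟩, hTh⟩
  have hsub : {S : Set V | {q} ⊆ S ∧ (G.induce S).Connected} ⊆
      insert {q} ((Sh \ {{h}}) \ {T}) := by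
    rintro S ⟨hqS, hS⟩
    rw [Set.singleton_subset_iff] at hqS
    by_cases hSq : S = {q}
    · exact Or.inl hSq
    obtain ⟨x, hxS, hxq⟩ : ∃ x ∈ S, x ≠ q := by
      by_contra! hx
      exact hSq (Set.eq_singleton_iff_unique_mem.mpr ⟨hqS, hx⟩)
    have : Nontrivial S := ⟨⟨x, hxS⟩, ⟨q, hqS⟩, fun h => hxq (congrArg Subtype.val h)⟩
    obtain ⟨w, hqw⟩ := hS.preconnected.exists_adj_of_nontrivial ⟨q, hqS⟩
    have hwh : w.1 = h := hleaf _ hqw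
    refine Or.inr ⟨⟨⟨Set.singleton_subset_iff.mpr (hwh ▸ w.2), hS⟩, ?_⟩,
      fun hST => hqT (hST ▸ hqS)⟩
    intro hSh
    rw [hSh, Set.mem_singleton_iff] at hqS
    exact hqT (hqS ▸ hhT)
  calc numSubtrees G q ≤ ((Sh \ {{h}}) \ {T}).ncard + 1 :=
        (Set.ncard_le_ncard hsub).trans (Set.ncard_insert_le _ _)
    _ = (Sh \ {{h}}).ncard := Set.ncard_sdiff_singleton_add_one hTmem
    _ < Sh.ncard := Set.ncard_sdiff_singleton_lt_of_mem hsingle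

/-- `(j + 1) * (K - j)` with `K = m - 1 + P` is maximal on `[0, m)` at the nearest point to
`(K - 1) / 2`, which is `min (m - 1) ((m + P - 2) / 2)`. -/
lemma succ_mul_sub_le_of_lt {m P j : ℕ} (hj : j < m) :
    (j + 1) * (m - 1 - j + P) ≤
      (min (m - 1) ((m + P - 2) / 2) + 1) * (m - 1 - min (m - 1) ((m + P - 2) / 2) + P) := by
  set c := min (m - 1) ((m + P - 2) / 2)
  have hcm : c ≤ m - 1 := min_le_left _ _
  zify [show j ≤ m - 1 by omega, hcm, show 1 ≤ m by omega]
  rcases lt_trichotomy j c with hjc | rfl | hjc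
  · have : 2 * c + 2 ≤ m + P := by omega
    nlinarith
  · rfl
  · have : m + P ≤ 2 * c + 3 := by omega
    nlinarith

lemma succ_mul_sub_lt_of_lt_min {m P j : ℕ} (hj : j < min (m - 1) ((m + P - 2) / 2)) :
    (j + 1) * (m - 1 - j + P) <
      (min (m - 1) ((m + P - 2) / 2) + 1) * (m - 1 - min (m - 1) ((m + P - 2) / 2) + P) := by
  set c := min (m - 1) ((m + P - 2) / 2)
  have hcm : c ≤ m - 1 := min_le_left _ _
  have : 2 * c + 2 ≤ m + P := by omega
  zify [show j ≤ m - 1 by omega, hcm, show 1 ≤ m by omega]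
  nlinarith

/-- The distance from the end `0` of the path to `v`. -/
def level (m : ℕ) {n : ℕ} (v : Fin n) : ℕ := min v.val m

/-- The subtree of `P_{m,g}` made of the path segment `[a, b]` and the pendant vertices `Q`. -/
def broom {n : ℕ} (a b : ℕ) (Q : Finset (Fin n)) : Set (Fin n) :=
  Fin.val ⁻¹' Set.Icc a b ∪ ↑Q

def pendants (m g : ℕ) : Finset (Fin (m + g)) :=
  Finset.univ.filter fun v => m ≤ v.val

section PathStar

variable {m g : ℕ}

lemma pathStar_adj_iff {u v : Fin (m + g)} :
    (pathStar (m + g) g).Adj u v ↔ u ≠ v ∧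
      (u.val + 1 = v.val ∧ v.val < m ∨ v.val + 1 = u.val ∧ u.val < m ∨
        u.val = m - 1 ∧ m ≤ v.val ∨ v.val = m - 1 ∧ m ≤ u.val) := by
  simp only [pathStar, fromRel_adj, Nat.add_sub_cancel]
  tauto

lemma pathStar_adj_of_succ_eq_level {u v : Fin (m + g)} (h : u.val + 1 = level m v) :
    (pathStar (m + g) g).Adj u v := by
  unfold level at h
  exact pathStar_adj_iff.mpr ⟨Fin.ne_of_val_ne (by omega), by omega⟩

lemma level_le_succ_of_pathStar_adj {u v : Fin (m + g)} (h : (pathStar (m + g) g).Adj u v) :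
    level m v ≤ level m u + 1 := by
  rw [pathStar_adj_iff] at h
  unfold level
  omega

@[simp]
lemma mem_pendants {v : Fin (m + g)} : v ∈ pendants m g ↔ m ≤ v.val := by
  simp [pendants]

lemma card_pendants : (pendants m g).card = g := by
  have : pendants m g = Finset.univ.map (Fin.natAddEmb m) := by
    ext v
    simp only [mem_pendants, Finset.mem_map, Finset.mem_univ, true_and, Fin.natAddEmb_apply]
    refine ⟨fun hv => ⟨⟨v.val - m, by omega⟩, Fin.ext ?_⟩, ?_⟩
    · simp only [Fin.val_natAdd]
      omega
    · rintro ⟨j, rfl⟩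
      simp
  rw [this, Finset.card_map, Finset.card_univ, Fintype.card_fin]

section Broom

variable {a b : ℕ} {Q : Finset (Fin (m + g))}

lemma mem_broom_of_lt (hQ : Q ⊆ pendants m g) {v : Fin (m + g)} (hv : v.val < m) :
    v ∈ broom a b Q ↔ a ≤ v.val ∧ v.val ≤ b := by
  have : v ∉ Q := fun h => by have := mem_pendants.mp (hQ h); omega
  simp [broom, this]

lemma mem_broom_of_le (hb : b < m) {v : Fin (m + g)} (hv : m ≤ v.val) :
    v ∈ broom a b Q ↔ v ∈ Q := by
  simp only [broom, Set.mem_union, Set.mem_preimage, Set.mem_Icc, Finset.mem_coe]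
  exact or_iff_right (by omega)

lemma eq_of_broom_eq {a' b' : ℕ} {Q' : Finset (Fin (m + g))} (hab : a ≤ b) (hb : b < m)
    (hab' : a' ≤ b') (hb' : b' < m) (hQ : Q ⊆ pendants m g) (hQ' : Q' ⊆ pendants m g)
    (h : broom a b Q = broom a' b' Q') : a = a' ∧ b = b' ∧ Q = Q' := by
  have spine : ∀ k < m, (a ≤ k ∧ k ≤ b ↔ a' ≤ k ∧ k ≤ b') := fun k hk => by
    obtain ⟨v, rfl⟩ : ∃ v : Fin (m + g), v.val = k := ⟨⟨k, by omega⟩, rfl⟩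
    rw [← mem_broom_of_lt hQ hk, ← mem_broom_of_lt hQ' hk, h]
  have := spine a (by omega)
  have := spine a' (by omega)
  have := spine b (by omega)
  have := spine b' (by omega)
  refine ⟨by omega, by omega, Finset.ext fun v => ?_⟩
  by_cases hv : m ≤ v.val
  · rw [← mem_broom_of_le hb hv, ← mem_broom_of_le hb' hv, h]
  · exact iff_of_false (fun h => hv (mem_pendants.mp (hQ h)))
      (fun h => hv (mem_pendants.mp (hQ' h)))

lemma exists_adj_lt_of_mem_broom (hab : a ≤ b) (hb : b < m) (hQ : Q ⊆ pendants m g)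
    (hQb : Q = ∅ ∨ b = m - 1) {v : Fin (m + g)} (hv : v ∈ broom a b Q) (hva : v.val ≠ a) :
    ∃ w ∈ broom a b Q, (pathStar (m + g) g).Adj v w ∧ w.val < v.val := by
  obtain ⟨h0, ha, hb'⟩ : 0 < level m v ∧ a ≤ level m v - 1 ∧ level m v - 1 ≤ b := by
    unfold level
    by_cases hvm : v.val < m
    · have := (mem_broom_of_lt hQ hvm).mp hv
      omega
    · have := hQb.resolve_left (Finset.ne_empty_of_mem ((mem_broom_of_le hb (by omega)).mp hv))
      omega
  obtain ⟨w, hw⟩ : ∃ w : Fin (m + g), w.val = level m v - 1 :=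
    ⟨⟨level m v - 1, by omega⟩, rfl⟩
  refine ⟨w, (mem_broom_of_lt hQ (by omega)).mpr (by omega),
    (pathStar_adj_of_succ_eq_level (by omega)).symm, ?_⟩
  unfold level at h0 hw
  omega

lemma induce_broom_connected (hab : a ≤ b) (hb : b < m) (hQ : Q ⊆ pendants m g)
    (hQb : Q = ∅ ∨ b = m - 1) : ((pathStar (m + g) g).induce (broom a b Q)).Connected := by
  obtain ⟨r, hr⟩ : ∃ r : Fin (m + g), r.val = a := ⟨⟨a, by omega⟩, rfl⟩
  have hrQ : r ∈ broom a b Q := (mem_broom_of_lt hQ (by omega)).mpr (by omega)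
  refine connected_of_exists_adj_lt ⟨r, hrQ⟩ (fun v => v.1.val) fun v hv => ?_
  obtain ⟨w, hw, hvw, hlt⟩ := exists_adj_lt_of_mem_broom hab hb hQ hQb v.2
    (fun h => hv (Subtype.ext (Fin.ext (h.trans hr.symm))))
  exact ⟨⟨w, hw⟩, hvw, hlt⟩

end Broom

lemma pathStar_connected (hm : 0 < m) : (pathStar (m + g) g).Connected := by
  refine connected_of_exists_adj_lt ⟨0, by omega⟩ Fin.val fun v hv => ?_
  have hv' : v ∈ broom 0 (m - 1) (pendants m g) := by
    by_cases h : v.val < m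
    · exact (mem_broom_of_lt subset_rfl h).mpr (by omega)
    · exact (mem_broom_of_le (by omega) (by omega)).mpr (mem_pendants.mpr (by omega))
  obtain ⟨w, -, hvw, hlt⟩ := exists_adj_lt_of_mem_broom (Nat.zero_le _) (by omega) subset_rfl
    (Or.inr rfl) hv' (fun h => hv (Fin.ext h))
  exact ⟨w, hvw, hlt⟩

lemma level_le_level_add_pathStar_dist (hm : 0 < m) (u v : Fin (m + g)) :
    level m v ≤ level m u + (pathStar (m + g) g).dist u v :=
  ((pathStar_connected hm).preconnected u v).le_add_dist _ fun _ _ => level_le_succ_of_pathStar_adj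

lemma pathStar_dist_le_of_le {u v : Fin (m + g)} (huv : u.val ≤ v.val) (hv : v.val < m) :
    (pathStar (m + g) g).dist u v ≤ v.val - u.val := by
  obtain ⟨d, hd⟩ : ∃ d, v.val = u.val + d := ⟨v.val - u.val, by omega⟩
  induction d generalizing v with
  | zero => simp [Fin.ext hd]
  | succ d ih =>
    obtain ⟨w, hw⟩ : ∃ w : Fin (m + g), w.val = u.val + d :=
      ⟨⟨u.val + d, by omega⟩, rfl⟩
    have hwv : (pathStar (m + g) g).Adj w v :=
      pathStar_adj_of_succ_eq_level (by unfold level; omega)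
    calc (pathStar (m + g) g).dist u v
        ≤ (pathStar (m + g) g).dist u w + (pathStar (m + g) g).dist w v :=
          (pathStar_connected (by omega)).dist_triangle
      _ ≤ (w.val - u.val) + 1 :=
          add_le_add (ih (by omega) (by omega) hw) (dist_eq_one_iff_adj.mpr hwv).le
      _ = v.val - u.val := by omega

lemma pathStar_dist_eq_of_le {u v : Fin (m + g)} (huv : u.val ≤ v.val) (hv : v.val < m) :
    (pathStar (m + g) g).dist u v = v.val - u.val := by
  refine (pathStar_dist_le_of_le huv hv).antisymm ?_
  have := level_le_level_add_pathStar_dist (by omega) u v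
  unfold level at this
  omega

lemma pathStar_dist_le_of_lt_of_le {u v : Fin (m + g)} (hu : u.val < m) (hv : m ≤ v.val) :
    (pathStar (m + g) g).dist u v ≤ m - u.val := by
  obtain ⟨w, hw⟩ : ∃ w : Fin (m + g), w.val = m - 1 := ⟨⟨m - 1, by omega⟩, rfl⟩
  have hwv : (pathStar (m + g) g).Adj w v := pathStar_adj_of_succ_eq_level (by unfold level; omega)
  calc (pathStar (m + g) g).dist u v
      ≤ (pathStar (m + g) g).dist u w + (pathStar (m + g) g).dist w v :=
        (pathStar_connected (by omega)).dist_triangle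
    _ ≤ (w.val - u.val) + 1 :=
        add_le_add (pathStar_dist_le_of_le (by omega) (by omega)) (dist_eq_one_iff_adj.mpr hwv).le
    _ = m - u.val := by omega

lemma pathStar_dist_le_two {u v : Fin (m + g)} (hm : 0 < m) (hu : m ≤ u.val) (hv : m ≤ v.val) :
    (pathStar (m + g) g).dist u v ≤ 2 := by
  obtain ⟨w, hw⟩ : ∃ w : Fin (m + g), w.val = m - 1 := ⟨⟨m - 1, by omega⟩, rfl⟩
  have huw := pathStar_dist_le_of_lt_of_le (by omega) hu (u := w)
  have hwv := pathStar_dist_le_of_lt_of_le (by omega) hv (u := w)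
  have := (pathStar_connected hm).dist_triangle (u := u) (v := w) (w := v)
  have : (pathStar (m + g) g).dist u w = (pathStar (m + g) g).dist w u := dist_comm
  omega

lemma ecc_pathStar (hm : 2 ≤ m) (hg : 0 < g) (v : Fin (m + g)) :
    ecc (pathStar (m + g) g) v = max (level m v) (m - level m v) := by
  obtain ⟨x, hx⟩ : ∃ x : Fin (m + g), x.val = 0 := ⟨⟨0, by omega⟩, rfl⟩
  obtain ⟨y, hy⟩ : ∃ y : Fin (m + g), y.val = m := ⟨⟨m, by omega⟩, rfl⟩
  refine le_antisymm (Finset.sup_le fun u _ => ?_) (max_le ?_ ?_)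
  · unfold level
    rcases lt_or_ge u.val m with hu | hu <;> rcases lt_or_ge v.val m with hv | hv
    · rcases le_total u.val v.val with huv | hvu
      · rw [pathStar_dist_eq_of_le huv hv]; omega
      · rw [SimpleGraph.dist_comm, pathStar_dist_eq_of_le hvu hu]; omega
    · have := pathStar_dist_le_of_lt_of_le hu hv; omega
    · rw [SimpleGraph.dist_comm]; have := pathStar_dist_le_of_lt_of_le hv hu; omega
    · have := pathStar_dist_le_two (by omega) hu hv; omega
  · have := level_le_level_add_pathStar_dist (by omega) x v
    have := dist_le_ecc (pathStar (m + g) g) x v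
    unfold level at *
    omega
  · have := level_le_level_add_pathStar_dist (by omega) v y
    have := dist_le_ecc (pathStar (m + g) g) y v
    rw [SimpleGraph.dist_comm] at this
    unfold level at *
    omega

lemma mem_center_pathStar_iff (hm : 2 ≤ m) (hg : 0 < g) {v : Fin (m + g)} :
    v ∈ _root_.center (pathStar (m + g) g) ↔ m / 2 ≤ v.val ∧ v.val ≤ (m + 1) / 2 := by
  obtain ⟨c, hc⟩ : ∃ c : Fin (m + g), c.val = m / 2 := ⟨⟨m / 2, by omega⟩, rfl⟩
  simp only [_root_.center, Set.mem_ofPred_eq, ecc_pathStar hm hg, level]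
  refine ⟨fun h => ?_, fun h u => by omega⟩
  have := h c
  omega

lemma mem_of_induce_connected_of_level_le {S : Set (Fin (m + g))}
    (hS : ((pathStar (m + g) g).induce S).Connected) {x y w : Fin (m + g)} (hx : x ∈ S)
    (hy : y ∈ S) (hw : w.val < m) (hxw : level m x ≤ w.val) (hwy : w.val ≤ level m y) :
    w ∈ S := by
  obtain ⟨p⟩ := hS.preconnected ⟨x, hx⟩ ⟨y, hy⟩
  obtain ⟨z, -, hz⟩ := p.exists_mem_support_eq (fun z => level m z.1)
    (fun _ _ h => level_le_succ_of_pathStar_adj h) hxw hwy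
  have : z.1 = w := Fin.ext (by unfold level at hz; omega)
  exact this ▸ z.2

lemma exists_broom_eq_of_induce_connected {S : Set (Fin (m + g))}
    (hS : ((pathStar (m + g) g).induce S).Connected) {v : Fin (m + g)} (hv : v ∈ S)
    (hvm : v.val < m) :
    ∃ a b Q, a ≤ b ∧ b < m ∧ Q ⊆ pendants m g ∧ (Q = ∅ ∨ b = m - 1) ∧
      S = broom a b Q := by
  classical
  have hfin : (S ∩ {u | u.val < m}).Finite := Set.toFinite _
  obtain ⟨lo, ⟨hloS, hlom⟩, hlo⟩ := Set.exists_min_image _ Fin.val hfin ⟨v, hv, hvm⟩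
  obtain ⟨hi, ⟨hiS, him⟩, hhi⟩ := Set.exists_max_image _ Fin.val hfin ⟨v, hv, hvm⟩
  replace hlom : lo.val < m := hlom
  replace him : hi.val < m := him
  have hspine : ∀ u : Fin (m + g), u.val < m →
      (u ∈ S ↔ lo.val ≤ u.val ∧ u.val ≤ hi.val) :=
    fun u hu => ⟨fun h => ⟨hlo u ⟨h, hu⟩, hhi u ⟨h, hu⟩⟩, fun h =>
      mem_of_induce_connected_of_level_le hS hloS hiS hu (by unfold level; omega)
        (by unfold level; omega)⟩
  set Q := (pendants m g).filter (· ∈ S)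
  refine ⟨lo.val, hi.val, Q, (hlo v ⟨hv, hvm⟩).trans (hhi v ⟨hv, hvm⟩), him,
    Finset.filter_subset _ _, ?_, ?_⟩
  · rcases Q.eq_empty_or_nonempty with hQ | ⟨q, hq⟩
    · exact Or.inl hQ
    obtain ⟨hqP, hqS⟩ := Finset.mem_filter.mp hq
    have := mem_pendants.mp hqP
    obtain ⟨w, hw⟩ : ∃ w : Fin (m + g), w.val = m - 1 := ⟨⟨m - 1, by omega⟩, rfl⟩
    have hwS := mem_of_induce_connected_of_level_le hS hloS hqS (w := w) (by omega)
      (by unfold level; omega) (by unfold level; omega)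
    have := ((hspine w (by omega)).mp hwS).2
    omega
  · ext u
    by_cases hu : u.val < m
    · rw [mem_broom_of_lt (Finset.filter_subset _ _) hu, hspine u hu]
    · rw [mem_broom_of_le him (by omega)]
      simp [Q, show m ≤ u.val by omega]

lemma numSubtrees_pathStar_of_lt {v : Fin (m + g)} (hv : v.val < m) :
    numSubtrees (pathStar (m + g) g) v = (v.val + 1) * (m - 1 - v.val + 2 ^ g) := by
  classical
  set R : Finset (ℕ × Finset (Fin (m + g))) :=
    Finset.Ico v.val (m - 1) ×ˢ {∅} ∪ {m - 1} ×ˢ (pendants m g).powerset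
  have hR : ∀ b Q, (b, Q) ∈ R ↔
      v.val ≤ b ∧ b < m ∧ Q ⊆ pendants m g ∧ (Q = ∅ ∨ b = m - 1) := by
    intro b Q
    simp only [R, Finset.mem_union, Finset.mem_product, Finset.mem_Ico, Finset.mem_singleton,
      Finset.mem_powerset]
    constructor
    · rintro (⟨hb, rfl⟩ | ⟨rfl, hQ⟩)
      · exact ⟨hb.1, by omega, Finset.empty_subset _, Or.inl rfl⟩
      · exact ⟨by omega, by omega, hQ, Or.inr rfl⟩
    · rintro ⟨h1, h2, hQ, rfl | rfl⟩
      · by_cases hb : b < m - 1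
        · exact Or.inl ⟨⟨h1, hb⟩, rfl⟩
        · exact Or.inr ⟨by omega, hQ⟩
      · exact Or.inr ⟨rfl, hQ⟩
  have hset : {S | {v} ⊆ S ∧ ((pathStar (m + g) g).induce S).Connected} =
      (fun t : ℕ × ℕ × Finset (Fin (m + g)) => broom t.1 t.2.1 t.2.2) ''
        ↑(Finset.Iic v.val ×ˢ R) := by
    ext S
    simp only [Set.singleton_subset_iff, Set.mem_ofPred_eq, Set.mem_image, Finset.coe_product,
      Set.mem_prod, Finset.mem_coe, Finset.mem_Iic, Prod.exists]
    constructor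
    · rintro ⟨hvS, hS⟩
      obtain ⟨a, b, Q, hab, hb, hQ, hQb, rfl⟩ := exists_broom_eq_of_induce_connected hS hvS hv
      have := (mem_broom_of_lt hQ hv).mp hvS
      exact ⟨a, b, Q, ⟨this.1, (hR b Q).mpr ⟨this.2, hb, hQ, hQb⟩⟩, rfl⟩
    · rintro ⟨a, b, Q, ⟨hav, hbQ⟩, rfl⟩
      obtain ⟨hvb, hb, hQ, hQb⟩ := (hR b Q).mp hbQ
      exact ⟨(mem_broom_of_lt hQ hv).mpr ⟨hav, hvb⟩,
        induce_broom_connected (by omega) hb hQ hQb⟩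
  have hinj : Set.InjOn (fun t : ℕ × ℕ × Finset (Fin (m + g)) => broom t.1 t.2.1 t.2.2)
      ↑(Finset.Iic v.val ×ˢ R) := by
    rintro ⟨a, b, Q⟩ ht ⟨a', b', Q'⟩ ht' h
    simp only [Finset.coe_product, Set.mem_prod, Finset.mem_coe, Finset.mem_Iic] at ht ht'
    obtain ⟨hvb, hb, hQ, -⟩ := (hR b Q).mp ht.2
    obtain ⟨hvb', hb', hQ', -⟩ := (hR b' Q').mp ht'.2
    obtain ⟨rfl, rfl, rfl⟩ := eq_of_broom_eq (by omega) hb (by omega) hb' hQ hQ' h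
    rfl
  have hdisj : Disjoint (Finset.Ico v.val (m - 1) ×ˢ {∅})
      ({m - 1} ×ˢ (pendants m g).powerset) := by
    rw [Finset.disjoint_left]
    rintro ⟨b, Q⟩ h h'
    simp only [Finset.mem_product, Finset.mem_Ico, Finset.mem_singleton] at h h'
    omega
  rw [numSubtrees, numSubtreesOn, hset, hinj.ncard_image, Set.ncard_coe_finset,
    Finset.card_product, Finset.card_union_of_disjoint hdisj, Finset.card_product,
    Finset.card_product, Nat.card_Iic, Nat.card_Ico, Finset.card_singleton, Finset.card_singleton,
    Finset.card_powerset, card_pendants]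
  ring_nf

lemma numSubtrees_pathStar_lt_of_le (hm : 2 ≤ m) {q h : Fin (m + g)} (hq : m ≤ q.val)
    (hh : h.val = m - 1) :
    numSubtrees (pathStar (m + g) g) q < numSubtrees (pathStar (m + g) g) h := by
  have hleaf : ∀ w, (pathStar (m + g) g).Adj q w → w = h := fun w hqw => by
    rw [pathStar_adj_iff] at hqw
    exact Fin.ext (by omega)
  have mem_T : ∀ {v : Fin (m + g)}, v.val < m →
      (v ∈ broom (m - 2) (m - 1) ∅ ↔ m - 2 ≤ v.val ∧ v.val ≤ m - 1) :=
    mem_broom_of_lt (Finset.empty_subset _)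
  obtain ⟨w, hw⟩ : ∃ w : Fin (m + g), w.val = m - 2 := ⟨⟨m - 2, by omega⟩, rfl⟩
  refine numSubtrees_lt_of_forall_adj_eq hleaf (induce_broom_connected (by omega) (by omega)
    (Finset.empty_subset _) (Or.inl rfl)) ((mem_T (by omega)).mpr (by omega))
    (fun hqT => by simp only [broom, Finset.coe_empty, Set.union_empty, Set.mem_preimage,
      Set.mem_Icc] at hqT; omega) fun hT => ?_
  have := (mem_T (v := w) (by omega)).mpr (by omega)
  rw [hT, Set.mem_singleton_iff, Fin.ext_iff] at this
  omega

lemma mem_subtreeCore_pathStar_iff (hm : 2 ≤ m) {v : Fin (m + g)} :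
    v ∈ subtreeCore (pathStar (m + g) g) ↔ v.val < m ∧ ∀ u : Fin (m + g), u.val < m →
      (u.val + 1) * (m - 1 - u.val + 2 ^ g) ≤ (v.val + 1) * (m - 1 - v.val + 2 ^ g) := by
  obtain ⟨h, hh⟩ : ∃ h : Fin (m + g), h.val = m - 1 := ⟨⟨m - 1, by omega⟩, rfl⟩
  refine ⟨fun hv => ?_, fun ⟨hvm, hmax⟩ u => ?_⟩
  · have hvm : v.val < m := by
      by_contra! hvm
      exact (numSubtrees_pathStar_lt_of_le hm hvm hh).not_ge (hv h)
    refine ⟨hvm, fun u hu => ?_⟩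
    rw [← numSubtrees_pathStar_of_lt hu, ← numSubtrees_pathStar_of_lt hvm]
    exact hv u
  · rw [numSubtrees_pathStar_of_lt hvm]
    by_cases hu : u.val < m
    · rw [numSubtrees_pathStar_of_lt hu]
      exact hmax u hu
    · have hlt := numSubtrees_pathStar_lt_of_le hm (not_lt.mp hu) hh
      rw [numSubtrees_pathStar_of_lt (v := h) (by omega)] at hlt
      exact hlt.le.trans (hmax h (by omega))

lemma setDist_center_subtreeCore_pathStar (hm : 2 ≤ m) (hg : 2 ≤ g) :
    setDist (pathStar (m + g) g) (_root_.center (pathStar (m + g) g))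
      (subtreeCore (pathStar (m + g) g)) = min (m - 1) ((m + 2 ^ g - 2) / 2) - (m + 1) / 2 := by
  have h4 : 4 ≤ 2 ^ g := by
    calc 4 = 2 ^ 2 := by norm_num
      _ ≤ 2 ^ g := Nat.pow_le_pow_right (by norm_num) hg
  obtain ⟨x₀, hx₀⟩ : ∃ x : Fin (m + g), x.val = (m + 1) / 2 :=
    ⟨⟨(m + 1) / 2, by omega⟩, rfl⟩
  obtain ⟨y₀, hy₀⟩ : ∃ y : Fin (m + g), y.val = min (m - 1) ((m + 2 ^ g - 2) / 2) :=
    ⟨⟨min (m - 1) ((m + 2 ^ g - 2) / 2), by omega⟩, rfl⟩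
  have hcenter : x₀ ∈ _root_.center (pathStar (m + g) g) :=
    (mem_center_pathStar_iff (by omega) (by omega)).mpr (by omega)
  have hcore : y₀ ∈ subtreeCore (pathStar (m + g) g) :=
    (mem_subtreeCore_pathStar_iff (by omega)).mpr
      ⟨by omega, fun u hu => hy₀ ▸ succ_mul_sub_le_of_lt hu⟩
  rw [setDist_eq_dist hcenter hcore, pathStar_dist_eq_of_le (by omega) (by omega), hx₀, hy₀]
  intro x hx y hy
  have := (mem_center_pathStar_iff (by omega) (by omega)).mp hx
  obtain ⟨hym, hmax⟩ := (mem_subtreeCore_pathStar_iff (by omega)).mp hy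
  have : y₀.val ≤ y.val := by
    by_contra! hlt
    exact (hy₀ ▸ succ_mul_sub_lt_of_lt_min (hy₀ ▸ hlt)).not_ge (hmax y₀ (by omega))
  rw [pathStar_dist_eq_of_le (by omega) (by omega), pathStar_dist_eq_of_le (by omega) hym]
  omega

end PathStar

theorem dist_center_subtreeCore_pathStar_general (n g : ℕ) (hg2 : 2 ≤ g)
    (hg : g ≤ n - 3) :
    (2 ^ g + 1 ≤ n - g →
      (Even (n - g) → setDist (pathStar n g) (_root_.center (pathStar n g))
          (subtreeCore (pathStar n g)) = 2 ^ (g - 1) - 1) ∧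
      (Odd (n - g) → setDist (pathStar n g) (_root_.center (pathStar n g))
          (subtreeCore (pathStar n g)) = 2 ^ (g - 1) - 2)) ∧
    (n - g < 2 ^ g + 1 →
      (Even (n - g) → setDist (pathStar n g) (_root_.center (pathStar n g))
          (subtreeCore (pathStar n g)) = (n - g - 2) / 2) ∧
      (Odd (n - g) → setDist (pathStar n g) (_root_.center (pathStar n g))
          (subtreeCore (pathStar n g)) = (n - g - 3) / 2)) := by
  obtain ⟨m, rfl⟩ : ∃ m, n = m + g := ⟨n - g, by omega⟩
  rw [Nat.add_sub_cancel, setDist_center_subtreeCore_pathStar (by omega) hg2]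
  have hpow : 2 ^ g = 2 * 2 ^ (g - 1) := by rw [← pow_succ']; congr 1; omega
  have : 2 ≤ 2 ^ (g - 1) := Nat.le_self_pow (by omega) 2
  refine ⟨fun _ => ⟨fun ⟨k, hk⟩ => ?_, fun ⟨k, hk⟩ => ?_⟩,
    fun _ => ⟨fun ⟨k, hk⟩ => ?_, fun ⟨k, hk⟩ => ?_⟩⟩ <;> omega

/-- The distance between the center and the subtree core of `P_{n-g,g}`. -/
theorem dist_center_subtreeCore_pathStar (n g : ℕ) (hn : 5 ≤ n) (hg2 : 2 ≤ g)
    (hg : g ≤ n - 3) :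
    (2 ^ g + 1 ≤ n - g →
      (Even (n - g) → setDist (pathStar n g) (_root_.center (pathStar n g))
          (subtreeCore (pathStar n g)) = 2 ^ (g - 1) - 1) ∧
      (Odd (n - g) → setDist (pathStar n g) (_root_.center (pathStar n g))
          (subtreeCore (pathStar n g)) = 2 ^ (g - 1) - 2)) ∧
    (n - g < 2 ^ g + 1 →
      (Even (n - g) → setDist (pathStar n g) (_root_.center (pathStar n g))
          (subtreeCore (pathStar n g)) = (n - g - 2) / 2) ∧
      (Odd (n - g) → setDist (pathStar n g) (_root_.center (pathStar n g))
          (subtreeCore (pathStar n g)) = (n - g - 3) / 2)) :=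
  dist_center_subtreeCore_pathStar_general n g hg2 hg
end
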